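/- Let C(z) satisfy C(z) = 1 + 2z C(z) + z² C(z)². For a positive integer n and integers t ≥ f ≥ 1, the coefficient of z^n in (1/(1+zC(z)))·((zC(z))^{t−f+2} − (zC(z))^{f+t+2})/(1−z²C(z)²) equals C(2n-3, n+f-t-2) − C(2n-3, n-f-t-2). -/

import Mathlib

/-- Binomial coefficient `C(a,b)` for integers `a`, `b`, with the convention that it
vanishes when `b < 0` or `b > a`. -/
def zchoose (a b : ℤ) : ℤ :=
  if 0 ≤ b ∧ b ≤ a then (a.toNat).choose b.toNat else 0

/-!
Put `W = 1 + zC`. The equation for `C` says `C = W²`, hence `W = 1 + zW²`: `W` is the Catalan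
series, `1/W = 1 - zW`, and `[z^N] W^r` is the ballot number `C(2N+r-1, N) - C(2N+r-1, N-1)`.
With `a = t - f + 2`, the quotient is the geometric sum `∑_{k<f} (zC)^{a+2k}`, and each term
contributes `[z^n] (1 - zW)(zW²)^m = [z^{n-m}] W^{2m-1} = C(2n-2, n-m) - C(2n-2, n-m-1)`.
By Pascal's rule these contributions telescope to the claimed difference in `2n-3`.
-/

open Finset PowerSeries

theorem zchoose_of_neg {a b : ℤ} (h : b < 0) : zchoose a b = 0 := by
  simp [zchoose, not_le.mpr h]

theorem zchoose_of_lt {a b : ℤ} (h : a < b) : zchoose a b = 0 := by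
  simp [zchoose, not_le.mpr h]

theorem zchoose_natCast (a b : ℕ) : zchoose a b = a.choose b := by
  by_cases h : b ≤ a
  · simp [zchoose, h]
  · rw [zchoose_of_lt (by omega), Nat.choose_eq_zero_of_lt (by omega), Nat.cast_zero]

theorem zchoose_add_one_left {a b : ℤ} (h : 0 ≤ a ∨ b < 0) :
    zchoose (a + 1) b = zchoose a b + zchoose a (b - 1) := by
  rcases lt_or_ge b 0 with hb | hb
  · rw [zchoose_of_neg hb, zchoose_of_neg hb, zchoose_of_neg (by omega), add_zero]
  lift a to ℕ using h.resolve_right (by omega)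
  lift b to ℕ using hb
  cases b with
  | zero => simp [zchoose]; omega
  | succ c =>
    rw [show (a : ℤ) + 1 = ((a + 1 : ℕ) : ℤ) by push_cast; ring,
      show ((c + 1 : ℕ) : ℤ) - 1 = (c : ℤ) by push_cast; ring,
      zchoose_natCast, zchoose_natCast, zchoose_natCast, Nat.choose_succ_succ, Nat.cast_add,
      add_comm]

theorem zchoose_add_one_sub {a b : ℤ} (h : 0 ≤ a ∨ b < 0) :
    zchoose (a + 1) b - zchoose (a + 1) (b - 1) = zchoose a b - zchoose a (b - 2) := by
  rw [zchoose_add_one_left h, zchoose_add_one_left (by omega), show b - 1 - 1 = b - 2 by ring]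
  ring

theorem sum_range_zchoose_sub (A j : ℤ) (f : ℕ) (h : 0 ≤ A ∨ j < 0) :
    ∑ k ∈ range f, (zchoose (A + 1) (j - 2 * k) - zchoose (A + 1) (j - 2 * k - 1)) =
      zchoose A j - zchoose A (j - 2 * f) := by
  induction f with
  | zero => simp
  | succ f ih =>
    rw [sum_range_succ, ih, zchoose_add_one_sub (by omega)]
    push_cast
    ring_nf

theorem catalan_eq_zchoose_sub (N : ℕ) :
    (catalan N : ℤ) = zchoose (2 * N) N - zchoose (2 * N) (N - 1) := by
  cases N with
  | zero => simp [zchoose]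
  | succ M =>
    rw [show 2 * ((M + 1 : ℕ) : ℤ) = ((2 * (M + 1) : ℕ) : ℤ) by push_cast; ring,
      show ((M + 1 : ℕ) : ℤ) - 1 = (M : ℤ) by push_cast; ring,
      zchoose_natCast, zchoose_natCast]
    have hcat : ((M + 2) * catalan (M + 1) : ℤ) = (2 * (M + 1)).choose (M + 1) := by
      exact_mod_cast succ_mul_catalan_eq_centralBinom (M + 1)
    have hshift : ((2 * (M + 1)).choose (M + 1) * (M + 1) : ℤ) =
        (2 * (M + 1)).choose M * (M + 2) := by
      have := Nat.choose_succ_right_eq (2 * (M + 1)) M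
      rw [show 2 * (M + 1) - M = M + 2 by omega] at this
      exact_mod_cast this
    apply mul_left_cancel₀ (show ((M : ℤ) + 2) ≠ 0 by positivity)
    linear_combination hcat - hshift

def ballot (r N : ℕ) : ℤ :=
  zchoose (2 * N + r - 1) N - zchoose (2 * N + r - 1) (N - 1)

theorem ballot_zero_succ (N : ℕ) : ballot 0 (N + 1) = 0 := by
  rw [ballot,
    show 2 * ((N + 1 : ℕ) : ℤ) + (0 : ℕ) - 1 = ((2 * N + 1 : ℕ) : ℤ) by push_cast; ring,
    show ((N + 1 : ℕ) : ℤ) - 1 = (N : ℤ) by push_cast; ring, zchoose_natCast, zchoose_natCast,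
    Nat.choose_symm_half, sub_self]

theorem ballot_one (N : ℕ) : ballot 1 N = catalan N := by
  rw [ballot, catalan_eq_zchoose_sub, Nat.cast_one, add_sub_cancel_right]

theorem ballot_add_two (r N : ℕ) :
    ballot (r + 2) N = ballot (r + 1) (N + 1) - ballot r (N + 1) := by
  have hM : (0 : ℤ) ≤ 2 * N + r + 1 := by positivity
  simp only [ballot]
  push_cast
  rw [show 2 * ((N : ℤ) + 1) + (r + 1) - 1 = 2 * N + r + 1 + 1 by ring,
    show 2 * ((N : ℤ) + 1) + r - 1 = 2 * N + r + 1 by ring,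
    show 2 * (N : ℤ) + (r + 2) - 1 = 2 * N + r + 1 by ring, add_sub_cancel_right,
    zchoose_add_one_left (.inl hM), zchoose_add_one_left (.inl hM), add_sub_cancel_right]
  ring

theorem ballot_zero_right {r : ℕ} (hr : 1 ≤ r) : ballot r 0 = 1 := by
  simp [ballot, zchoose]
  omega

section CatalanSeries

variable {R : Type*} [CommRing R] {W : R⟦X⟧}

theorem coeff_eq_catalan_of_eq (hW : W = 1 + X * W ^ 2) (N : ℕ) : coeff N W = catalan N := by
  induction N using Nat.strong_induction_on with
  | _ N ih =>
    rw [hW]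
    cases N with
    | zero => simp
    | succ M =>
      rw [map_add, coeff_succ_X_mul, coeff_one, if_neg M.succ_ne_zero, zero_add, sq, coeff_mul,
        catalan_succ', Nat.cast_sum]
      refine sum_congr rfl fun p hp => ?_
      have hsum : p.1 + p.2 = M := mem_antidiagonal.mp hp
      rw [ih p.1 (by omega), ih p.2 (by omega), Nat.cast_mul]

theorem coeff_pow_add_two_of_eq (hW : W = 1 + X * W ^ 2) (r N : ℕ) :
    coeff N (W ^ (r + 2)) = coeff (N + 1) (W ^ (r + 1)) - coeff (N + 1) (W ^ r) := by
  have hrec : W ^ (r + 1) = W ^ r + X * W ^ (r + 2) := by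
    linear_combination W ^ r * hW
  rw [hrec, map_add, coeff_succ_X_mul, add_sub_cancel_left]

theorem coeff_succ_pow_eq_ballot (hW : W = 1 + X * W ^ 2) (r N : ℕ) :
    coeff (N + 1) (W ^ r) = ballot r (N + 1) := by
  induction r using Nat.twoStepInduction generalizing N with
  | zero => simp [ballot_zero_succ]
  | one => rw [pow_one, coeff_eq_catalan_of_eq hW, ballot_one, Int.cast_natCast]
  | more r ih₀ ih₁ =>
    rw [coeff_pow_add_two_of_eq hW, ih₁, ih₀, ballot_add_two, Int.cast_sub]

theorem coeff_pow_eq_ballot (hW : W = 1 + X * W ^ 2) {r : ℕ} (hr : 1 ≤ r) (N : ℕ) :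
    coeff N (W ^ r) = ballot r N := by
  cases N with
  | zero =>
    have hW₀ : constantCoeff W = 1 := by rw [hW]; simp
    rw [coeff_zero_eq_constantCoeff_apply, map_pow, hW₀, one_pow, ballot_zero_right hr,
      Int.cast_one]
  | succ N => exact coeff_succ_pow_eq_ballot hW r N

theorem one_sub_X_mul_mul_X_mul_sq_pow_of_eq (hW : W = 1 + X * W ^ 2) {m : ℕ} (hm : 1 ≤ m) :
    (1 - X * W) * (X * W ^ 2) ^ m = X ^ m * W ^ (2 * m - 1) := by
  obtain ⟨m, rfl⟩ := Nat.exists_eq_add_of_le' hm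
  rw [show 2 * (m + 1) - 1 = 2 * m + 1 by omega]
  linear_combination X ^ (m + 1) * W ^ (2 * m + 1) * hW

theorem coeff_X_pow_mul_pow_two_mul_sub_one (hW : W = 1 + X * W ^ 2) {m : ℕ} (hm : 1 ≤ m)
    (n : ℕ) :
    coeff n (X ^ m * W ^ (2 * m - 1)) =
      ((zchoose (2 * n - 2) (n - m) - zchoose (2 * n - 2) (n - m - 1) : ℤ) : R) := by
  rw [coeff_X_pow_mul']
  split_ifs with hmn
  · rw [coeff_pow_eq_ballot hW (by omega), ballot]
    push_cast [Nat.cast_sub hmn, Nat.cast_sub (show 1 ≤ 2 * m by omega)]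
    ring_nf
  · rw [zchoose_of_neg (by omega), zchoose_of_neg (by omega), sub_zero, Int.cast_zero]

end CatalanSeries

theorem inv_eq_one_sub_X_mul_of_eq {k : Type*} [Field k] {W : k⟦X⟧} (hW : W = 1 + X * W ^ 2) :
    W⁻¹ = 1 - X * W := by
  have hW₀ : constantCoeff W ≠ 0 := by rw [hW]; simp
  rw [PowerSeries.inv_eq_iff_mul_eq_one hW₀]
  linear_combination hW

theorem pow_sub_pow_add_two_mul_eq_sum_mul {R : Type*} [CommRing R] (x : R) (a f : ℕ) :
    x ^ a - x ^ (a + 2 * f) = (∑ k ∈ range f, x ^ (a + 2 * k)) * (1 - x ^ 2) := by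
  induction f with
  | zero => simp
  | succ f ih =>
    rw [sum_range_succ, add_mul, ← ih]
    ring

open PowerSeries in
theorem coeff_motzkin_term5_general (C : PowerSeries ℚ)
    (hC : C = 1 + 2 * X * C + X ^ 2 * C ^ 2) (n f t : ℕ)
    (htf : f ≤ t) :
    PowerSeries.coeff n
        ((1 + X * C)⁻¹ * (((X * C) ^ (t - f + 2) - (X * C) ^ (f + t + 2))
          * (1 - X ^ 2 * C ^ 2)⁻¹)) =
      ((zchoose (2 * (n : ℤ) - 3) ((n : ℤ) + f - t - 2)
        - zchoose (2 * (n : ℤ) - 3) ((n : ℤ) - f - t - 2) : ℤ) : ℚ) := by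
  obtain ⟨W, hWdef⟩ : ∃ W, W = 1 + X * C := ⟨_, rfl⟩
  have hCW : C = W ^ 2 := by rw [hWdef]; linear_combination hC
  have hW : W = 1 + X * W ^ 2 := by rw [← hCW, hWdef]
  have hgeom := pow_sub_pow_add_two_mul_eq_sum_mul (X * C) (t - f + 2) f
  rw [show t - f + 2 + 2 * f = f + t + 2 by omega, mul_pow X C 2] at hgeom
  have hunit : constantCoeff (1 - X ^ 2 * C ^ 2) ≠ 0 := by simp
  rw [hgeom, mul_assoc, PowerSeries.mul_inv_cancel _ hunit, mul_one, ← hWdef,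
    inv_eq_one_sub_X_mul_of_eq hW, mul_sum, map_sum, hCW]
  rw [sum_congr rfl fun k _ => by
    rw [one_sub_X_mul_mul_X_mul_sq_pow_of_eq hW (m := t - f + 2 + 2 * k) (by omega),
      coeff_X_pow_mul_pow_two_mul_sub_one hW (by omega)]]
  have htel := sum_range_zchoose_sub (2 * n - 3) (n + f - t - 2) f (by omega)
  rw [show (n : ℤ) - f - t - 2 = n + f - t - 2 - 2 * f by ring, ← htel, ← Int.cast_sum]
  congr 1
  refine sum_congr rfl fun k _ => ?_
  push_cast [Nat.cast_sub htf]
  ring_nf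

open PowerSeries in
/-- If `C(z)` satisfies `C = 1 + 2zC + z²C²`, then for a positive integer `n` and
integers `t ≥ f ≥ 1`, the coefficient of `z^n` in
`(1/(1+zC))·((zC)^{t−f+2} − (zC)^{f+t+2})/(1−z²C²)` equals
`C(2n-3,n+f-t-2) − C(2n-3,n-f-t-2)`. -/
theorem coeff_motzkin_term5 (C : PowerSeries ℚ)
    (hC : C = 1 + 2 * X * C + X ^ 2 * C ^ 2) (n f t : ℕ) (hn : 1 ≤ n) (hf : 1 ≤ f)
    (htf : f ≤ t) :
    PowerSeries.coeff n
        ((1 + X * C)⁻¹ * (((X * C) ^ (t - f + 2) - (X * C) ^ (f + t + 2))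
          * (1 - X ^ 2 * C ^ 2)⁻¹)) =
      ((zchoose (2 * (n : ℤ) - 3) ((n : ℤ) + f - t - 2)
        - zchoose (2 * (n : ℤ) - 3) ((n : ℤ) - f - t - 2) : ℤ) : ℚ) :=
  coeff_motzkin_term5_general C hC n f t htf
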